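/- arXiv:1009.2528 — 3 statements merged into one kernel-verified Lean document; each statement's English description precedes it below -/
import Mathlib

section
/- The ratio of the optimal linear cost J_lin = inf_{P>=0}[k^2 P + ((σ0-√P)^+)^2/(((σ0-√P)^+)^2+1)] to the quantization cost bound k^2 a^2 diverges to infinity as k → 0 and σ0 → ∞. Specifically, for any P: if P < σ0^2/4 then the linear cost is at least σ0^2/(σ0^2+4), and if P >= σ0^2/4 then it is at least k^2 σ0^2/4; hence J_lin / (k^2 a^2) >= min{ σ0^2/((σ0^2+4) k^2 a^2), σ0^2/(4a^2) }. -/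
open Real

/-- Cost of a linear strategy of power `P` in the scalar stochastic Witsenhausen problem. -/
noncomputable def linCost (k σ0 P : ℝ) : ℝ :=
  k ^ 2 * P + (max (σ0 - Real.sqrt P) 0) ^ 2 / ((max (σ0 - Real.sqrt P) 0) ^ 2 + 1)

/-- Optimal cost of linear strategies. -/
noncomputable def Jlin (k σ0 : ℝ) : ℝ := ⨅ P : {p : ℝ // 0 ≤ p}, linCost k σ0 P.1

/-!
A linear strategy of power `P` either spends at least `σ0²/4` on the first stage, costing
`k² σ0²/4`, or leaves a residual standard deviation `σ0 - √P > σ0/2`, whose estimation error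
`x²/(x² + 1)` is then at least `σ0²/(σ0² + 4)`, close to `1` for large `σ0`. Hence
`J_lin ≥ min (1/2) (k² σ0²/4)` once `σ0 ≥ 2`; divided by `k² a²`, the first term blows up as
`k → 0` and the second as `σ0 → ∞`.
-/

lemma div_add_one_le_div_add_one {α : Type*} [Field α] [LinearOrder α] [IsStrictOrderedRing α]
    {s t : α} (hs : 0 ≤ s) (hst : s ≤ t) : s / (s + 1) ≤ t / (t + 1) := by
  rw [div_le_div_iff₀ (by positivity) (by linarith)]
  linarith

lemma linCost_ge_of_lt (k : ℝ) {σ0 P : ℝ} (hσ0 : 0 < σ0) (hP : 0 ≤ P) (hPσ : P < σ0 ^ 2 / 4) :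
    σ0 ^ 2 / (σ0 ^ 2 + 4) ≤ linCost k σ0 P := by
  have hsqrt : √P < σ0 / 2 := by
    rw [Real.sqrt_lt' (by positivity)]
    linarith
  have hgap : σ0 / 2 ≤ max (σ0 - √P) 0 := le_max_of_le_left (by linarith)
  have herror : σ0 ^ 2 / (σ0 ^ 2 + 4) ≤
      (max (σ0 - √P) 0) ^ 2 / ((max (σ0 - √P) 0) ^ 2 + 1) :=
    calc σ0 ^ 2 / (σ0 ^ 2 + 4) = (σ0 / 2) ^ 2 / ((σ0 / 2) ^ 2 + 1) := by field_simp; ring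
      _ ≤ _ := div_add_one_le_div_add_one (by positivity)
          (pow_le_pow_left₀ (by positivity) hgap 2)
  have hpower : 0 ≤ k ^ 2 * P := by positivity
  unfold linCost
  linarith

lemma linCost_ge_of_le (k : ℝ) {σ0 P : ℝ} (hPσ : σ0 ^ 2 / 4 ≤ P) :
    k ^ 2 * σ0 ^ 2 / 4 ≤ linCost k σ0 P := by
  have hpower : k ^ 2 * (σ0 ^ 2 / 4) ≤ k ^ 2 * P := mul_le_mul_of_nonneg_left hPσ (sq_nonneg k)
  have herror : 0 ≤ (max (σ0 - √P) 0) ^ 2 / ((max (σ0 - √P) 0) ^ 2 + 1) := by positivity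
  unfold linCost
  linarith [mul_div_assoc (k ^ 2) (σ0 ^ 2) 4]

lemma min_le_Jlin (k : ℝ) {σ0 : ℝ} (hσ0 : 0 < σ0) :
    min (σ0 ^ 2 / (σ0 ^ 2 + 4)) (k ^ 2 * σ0 ^ 2 / 4) ≤ Jlin k σ0 :=
  le_ciInf fun ⟨P, hP⟩ => by
    rcases lt_or_ge P (σ0 ^ 2 / 4) with hPσ | hPσ
    · exact (min_le_left _ _).trans (linCost_ge_of_lt k hσ0 hP hPσ)
    · exact (min_le_right _ _).trans (linCost_ge_of_le k hPσ)

lemma half_min_le_Jlin (k : ℝ) {σ0 : ℝ} (hσ0 : 2 ≤ σ0) :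
    min (1 / 2) (k ^ 2 * σ0 ^ 2 / 4) ≤ Jlin k σ0 := by
  have hhalf : 1 / 2 ≤ σ0 ^ 2 / (σ0 ^ 2 + 4) := by
    rw [div_le_div_iff₀ (by norm_num) (by positivity)]
    nlinarith
  exact (min_le_min_right _ hhalf).trans (min_le_Jlin k (by linarith))

lemma min_le_Jlin_div {k σ0 : ℝ} (hk : k ≠ 0) (hσ0 : 0 < σ0) (a : ℝ) :
    min (σ0 ^ 2 / ((σ0 ^ 2 + 4) * k ^ 2 * a ^ 2)) (σ0 ^ 2 / (4 * a ^ 2)) ≤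
      Jlin k σ0 / (k ^ 2 * a ^ 2) := by
  have hsmall : σ0 ^ 2 / ((σ0 ^ 2 + 4) * k ^ 2 * a ^ 2) =
      σ0 ^ 2 / (σ0 ^ 2 + 4) / (k ^ 2 * a ^ 2) := by
    rw [div_div, mul_assoc]
  have hlarge : σ0 ^ 2 / (4 * a ^ 2) = k ^ 2 * σ0 ^ 2 / 4 / (k ^ 2 * a ^ 2) := by
    rw [div_div, mul_left_comm 4, mul_div_mul_left _ _ (pow_ne_zero 2 hk)]
  rw [hsmall, hlarge, min_div_div_right (by positivity)]
  exact div_le_div_of_nonneg_right (min_le_Jlin k hσ0) (by positivity)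

/-- Linear strategies lose an arbitrarily large factor to quantization: if `P < σ0²/4` the
linear cost is at least `σ0²/(σ0² + 4)`; if `P ≥ σ0²/4` it is at least `k² σ0²/4`; hence
`J_lin / (k² a²) ≥ min { σ0²/((σ0² + 4) k² a²), σ0²/(4a²) }`, and the ratio of the optimal
linear cost to the quantization cost bound `k² a²` diverges as `k → 0`, `σ0 → ∞`. -/
theorem linear_vs_quantization_ratio_diverges
    (k σ0 a : ℝ) (hk : 0 < k) (hσ0 : 0 < σ0) (ha : 0 < a) :
    (∀ P : ℝ, 0 ≤ P → P < σ0 ^ 2 / 4 → linCost k σ0 P ≥ σ0 ^ 2 / (σ0 ^ 2 + 4)) ∧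
    (∀ P : ℝ, σ0 ^ 2 / 4 ≤ P → linCost k σ0 P ≥ k ^ 2 * σ0 ^ 2 / 4) ∧
    Jlin k σ0 / (k ^ 2 * a ^ 2) ≥
      min (σ0 ^ 2 / ((σ0 ^ 2 + 4) * k ^ 2 * a ^ 2)) (σ0 ^ 2 / (4 * a ^ 2)) ∧
    (∀ M > (0 : ℝ), ∃ K S : ℝ, 0 < K ∧
      ∀ k' σ0' : ℝ, 0 < k' → k' < K → S < σ0' →
        Jlin k' σ0' / (k' ^ 2 * a ^ 2) > M) := by
  refine ⟨fun P => linCost_ge_of_lt k hσ0, fun P => linCost_ge_of_le k,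
    min_le_Jlin_div hk.ne' hσ0 a, fun M hM => ?_⟩
  have hMa : 0 < M * a ^ 2 := by positivity
  refine ⟨√(1 / (2 * (M * a ^ 2))), max 2 √(4 * (M * a ^ 2)), by positivity,
    fun k' σ0' hk' hkK hS => ?_⟩
  have hσ0' : 2 ≤ σ0' := (le_max_left _ _).trans hS.le
  have hkM : k' ^ 2 * (2 * (M * a ^ 2)) < 1 := by
    rwa [← lt_div_iff₀ (by positivity), ← Real.lt_sqrt hk'.le]
  have hσM : 4 * (M * a ^ 2) < σ0' ^ 2 :=
    (Real.sqrt_lt' (by linarith)).1 ((le_max_right _ _).trans_lt hS)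
  have hk2 : 0 < k' ^ 2 := by positivity
  rw [gt_iff_lt, lt_div_iff₀ (by positivity)]
  refine lt_of_lt_of_le (lt_min ?_ ?_) (half_min_le_Jlin k' hσ0')
  · linarith
  · nlinarith [mul_lt_mul_of_pos_left hσM hk2]
end

section
/- For the adversarial Witsenhausen problem with |z_i| < √3, the optimal worst-case cost satisfies J_opt,freq >= inf_{P>=0} [ k^2 P + ((√(6/(πe)) - √P)^+)^2 ]. -/
/-!
The adversary may round the first-stage state `x₁ = x₀ + γ₁ x₀` to the lattice `s ℤᵐ` for any
mesh `s < 2√3`, so the decoder `γ₂` is only ever evaluated at lattice points. If the worst-case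
cost is `c`, every `x₀` then lies within `ρ = √((1 + k²) m c / k²)` of the decoder's output at a
lattice point a bounded distance away from `x₀`. Counting lattice points in large cubes, the
balls of radius `ρ` around these outputs must account for volume `sᵐ` per lattice point, so
`sᵐ ≤ vol B_ρ ≤ (ρ √(2πe/m))ᵐ` by `Γ(x + 1) ≥ (x/e)ˣ`. Letting `s → 2√3` gives
`c ≥ 6/(πe) · k²/(1 + k²)`, which is the value of the infimum at `√P = √(6/(πe)) / (1 + k²)`.
-/

open Real

/-- One-shot cost of strategy `(γ1, γ2)` against the realization `(x0, z)` in the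
(vector) Witsenhausen problem. -/
noncomputable def advCost (m : ℕ) (k : ℝ)
    (γ1 γ2 : EuclideanSpace ℝ (Fin m) → EuclideanSpace ℝ (Fin m))
    (x0 z : EuclideanSpace ℝ (Fin m)) : ℝ :=
  (k ^ 2 / m) * ‖γ1 x0‖ ^ 2 + (1 / m) * ‖x0 + γ1 x0 - γ2 (x0 + γ1 x0 + z)‖ ^ 2

open MeasureTheory Set Metric Filter Topology

theorem Real.div_exp_one_rpow_le_Gamma_add_one {x : ℝ} (hx : 0 ≤ x) :
    (x / exp 1) ^ x ≤ Gamma (x + 1) := by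
  have hint : IntegrableOn (fun t : ℝ => exp (-t) * t ^ x) (Ioi 0) := by
    simpa using GammaIntegral_convergent (s := x + 1) (by linarith)
  calc (x / exp 1) ^ x = ∫ t in Ioi x, exp (-t) * x ^ x := by
        rw [integral_mul_const, integral_exp_neg_Ioi, div_rpow hx (exp_pos 1).le,
          exp_one_rpow, exp_neg, div_eq_inv_mul]
    _ ≤ ∫ t in Ioi x, exp (-t) * t ^ x :=
        setIntegral_mono_on ((integrableOn_exp_neg_Ioi x).mul_const _)
          (hint.mono_set (Ioi_subset_Ioi hx)) measurableSet_Ioi fun t ht =>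
          mul_le_mul_of_nonneg_left (rpow_le_rpow hx (le_of_lt ht) hx) (exp_pos _).le
    _ ≤ ∫ t in Ioi 0, exp (-t) * t ^ x :=
        setIntegral_mono_set hint
          ((ae_restrict_mem measurableSet_Ioi).mono fun t (ht : 0 < t) => by positivity)
          (Ioi_subset_Ioi hx).eventuallyLE
    _ = Gamma (x + 1) := by rw [Gamma_eq_integral (by linarith), add_sub_cancel_right]

theorem EuclideanSpace.volume_real_closedBall_le {m : ℕ} (hm : 0 < m)
    (x : EuclideanSpace ℝ (Fin m)) {ρ : ℝ} (hρ : 0 ≤ ρ) :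
    volume.real (closedBall x ρ) ≤ (ρ * √(2 * π * exp 1 / m)) ^ m := by
  have : Nonempty (Fin m) := ⟨⟨0, hm⟩⟩
  have hm' : (0 : ℝ) < m := by exact_mod_cast hm
  have hΓ : √(m / 2 / exp 1) ^ m ≤ Gamma (m / 2 + 1) := by
    have h := Real.div_exp_one_rpow_le_Gamma_add_one (x := m / 2) (by positivity)
    rwa [sqrt_eq_rpow, ← rpow_natCast, ← rpow_mul (by positivity), one_div_mul_eq_div]
  have hsplit : √(2 * π * exp 1 / m) = √π / √(m / 2 / exp 1) := by
    rw [← sqrt_div pi_nonneg]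
    congr 1
    field_simp
  rw [measureReal_def, EuclideanSpace.volume_closedBall, Fintype.card_fin, ENNReal.toReal_mul,
    ENNReal.toReal_pow, ENNReal.toReal_ofReal hρ, ENNReal.toReal_ofReal (by positivity),
    mul_pow, hsplit, div_pow]
  gcongr

theorem EuclideanSpace.volume_cube (m : ℕ) (r : ℝ) :
    volume {x : EuclideanSpace ℝ (Fin m) | ∀ i, x i ∈ Icc (-r) r} =
      ENNReal.ofReal (2 * r) ^ m := by
  have hpre : {x : EuclideanSpace ℝ (Fin m) | ∀ i, x i ∈ Icc (-r) r} =
      WithLp.ofLp ⁻¹' univ.pi fun _ => Icc (-r) r := by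
    ext x
    simp only [mem_ofPred_eq, mem_preimage, mem_univ_pi]
  rw [hpre, (PiLp.volume_preserving_ofLp (Fin m)).measure_preimage
    (MeasurableSet.univ_pi fun _ => measurableSet_Icc).nullMeasurableSet, volume_pi_pi]
  simp [Real.volume_Icc, two_mul]

theorem Int.card_Icc_neg_self (N : ℕ) : (Finset.Icc (-(N : ℤ)) N).card = 2 * N + 1 := by
  rw [Int.card_Icc]
  omega

theorem pow_le_volume_real_closedBall_of_lattice_cover {m : ℕ} {s ρ D : ℝ} (hs : 0 < s)
    (f : (Fin m → ℤ) → EuclideanSpace ℝ (Fin m))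
    (hf : ∀ x, ∃ v : Fin m → ℤ, (∀ i, |v i * s - x i| ≤ D) ∧ dist x (f v) ≤ ρ) :
    s ^ m ≤ volume.real (closedBall (0 : EuclideanSpace ℝ (Fin m)) ρ) := by
  set V := volume.real (closedBall (0 : EuclideanSpace ℝ (Fin m)) ρ)
  set K := ⌈D / s⌉₊
  have hD : D ≤ K * s := (div_le_iff₀ hs).mp (Nat.le_ceil _)
  have hcube : ∀ n : ℕ, (2 * (n * s)) ^ m ≤ (2 * (n + K) + 1 : ℝ) ^ m * V := by
    intro n
    set S := Fintype.piFinset fun _ : Fin m => Finset.Icc (-((n + K : ℕ) : ℤ)) (n + K : ℕ)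
    have hcover : {x : EuclideanSpace ℝ (Fin m) | ∀ i, x i ∈ Icc (-(n * s)) (n * s)} ⊆
        ⋃ v ∈ S, closedBall (f v) ρ := by
      intro x hx
      obtain ⟨v, hvx, hdist⟩ := hf x
      refine mem_biUnion (Fintype.mem_piFinset.mpr fun i => ?_) hdist
      have hvi : |(v i : ℝ)| * s ≤ (n + K) * s := by
        have := abs_le.mpr (hx i)
        calc |(v i : ℝ)| * s = |v i * s - x i + x i| := by
              rw [sub_add_cancel, abs_mul, abs_of_pos hs]
          _ ≤ |v i * s - x i| + |x i| := abs_add_le _ _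
          _ ≤ (n + K) * s := by linarith [hvx i]
      have := abs_le.mp (le_of_mul_le_mul_right hvi hs)
      rw [Finset.mem_Icc]
      exact ⟨by exact_mod_cast this.1, by exact_mod_cast this.2⟩
    have hvol : ENNReal.ofReal (2 * (n * s)) ^ m ≤
        (S.card : ENNReal) * volume (closedBall (0 : EuclideanSpace ℝ (Fin m)) ρ) := by
      rw [← EuclideanSpace.volume_cube]
      calc _ ≤ volume (⋃ v ∈ S, closedBall (f v) ρ) := measure_mono hcover
        _ ≤ ∑ v ∈ S, volume (closedBall (f v) ρ) := measure_biUnion_finset_le _ _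
        _ = _ := by
          simp_rw [Measure.addHaar_closedBall_center, Finset.sum_const, nsmul_eq_mul]
    have := ENNReal.toReal_mono (ENNReal.mul_ne_top (ENNReal.natCast_ne_top _)
      measure_closedBall_lt_top.ne) hvol
    rw [ENNReal.toReal_mul, ENNReal.toReal_pow, ENNReal.toReal_ofReal (by positivity),
      ENNReal.toReal_natCast, Fintype.card_piFinset, Finset.prod_const, Finset.card_univ,
      Fintype.card_fin, Int.card_Icc_neg_self, ← measureReal_def] at this
    exact_mod_cast this
  have hlim :
      Tendsto (fun n : ℕ => ((n / (n + (K + 1 / 2)) : ℝ) * s) ^ m) atTop (𝓝 (s ^ m)) := by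
    simpa using ((tendsto_natCast_div_add_atTop ((K : ℝ) + 1 / 2)).mul_const s).pow m
  refine le_of_tendsto' hlim fun n => ?_
  rw [show (n / (n + (K + 1 / 2)) : ℝ) * s = 2 * (n * s) / (2 * (n + K) + 1) by
    field_simp; ring, div_pow, div_le_iff₀ (by positivity)]
  exact (hcube n).trans_eq (mul_comm _ _)

theorem le_mul_sqrt_of_lattice_cover {m : ℕ} (hm : 0 < m) {s ρ D : ℝ} (hs : 0 < s)
    (f : (Fin m → ℤ) → EuclideanSpace ℝ (Fin m))
    (hf : ∀ x, ∃ v : Fin m → ℤ, (∀ i, |v i * s - x i| ≤ D) ∧ dist x (f v) ≤ ρ) :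
    s ≤ ρ * √(2 * π * exp 1 / m) := by
  obtain ⟨v, -, hv⟩ := hf 0
  have hρ : 0 ≤ ρ := dist_nonneg.trans hv
  refine le_of_pow_le_pow_left₀ hm.ne' (by positivity) ?_
  exact (pow_le_volume_real_closedBall_of_lattice_cover hs f hf).trans
    (EuclideanSpace.volume_real_closedBall_le hm 0 hρ)

theorem mul_sq_add_le (k a b : ℝ) :
    k ^ 2 * (a + b) ^ 2 ≤ (1 + k ^ 2) * (k ^ 2 * a ^ 2 + b ^ 2) := by
  nlinarith [sq_nonneg (k ^ 2 * a - b)]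

theorem abs_round_div_mul_sub_le {s : ℝ} (hs : 0 < s) (y : ℝ) :
    |round (y / s) * s - y| ≤ s / 2 := by
  rw [show round (y / s) * s - y = (round (y / s) - y / s) * s by field_simp, abs_mul,
    abs_of_pos hs, abs_sub_comm]
  linarith [mul_le_mul_of_nonneg_right (abs_sub_round (y / s)) hs.le]

theorem advCost_nonneg (m : ℕ) (k : ℝ)
    (γ1 γ2 : EuclideanSpace ℝ (Fin m) → EuclideanSpace ℝ (Fin m))
    (x0 z : EuclideanSpace ℝ (Fin m)) : 0 ≤ advCost m k γ1 γ2 x0 z := by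
  unfold advCost
  positivity

theorem advCost_zero_id_le {m : ℕ} (k : ℝ) (x0 : EuclideanSpace ℝ (Fin m))
    {z : EuclideanSpace ℝ (Fin m)} (hz : ∀ i, |z i| < √3) :
    advCost m k (fun _ => 0) id x0 z ≤ 3 := by
  have hz2 : ‖z‖ ^ 2 ≤ 3 * m := by
    rw [EuclideanSpace.real_norm_sq_eq]
    calc ∑ i, z i ^ 2 ≤ ∑ _i : Fin m, (3 : ℝ) := by
          refine Finset.sum_le_sum fun i _ => ?_
          rw [← sq_abs, ← sq_sqrt (show (0 : ℝ) ≤ 3 by norm_num)]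
          exact pow_le_pow_left₀ (abs_nonneg _) (hz i).le 2
      _ = 3 * m := by simp [mul_comm]
  rcases Nat.eq_zero_or_pos m with rfl | hm
  · simp [advCost]
  have hm' : (0 : ℝ) < m := by exact_mod_cast hm
  simp only [advCost, norm_zero, id_eq, add_zero, sub_add_cancel_left, norm_neg, ne_eq,
    OfNat.ofNat_ne_zero, not_false_eq_true, zero_pow, mul_zero, zero_add, one_div]
  rw [inv_mul_le_iff₀ hm']
  linarith

theorem natCast_mul_advCost {m : ℕ} (hm : m ≠ 0) (k : ℝ)
    (γ1 γ2 : EuclideanSpace ℝ (Fin m) → EuclideanSpace ℝ (Fin m))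
    (x0 z : EuclideanSpace ℝ (Fin m)) :
    m * advCost m k γ1 γ2 x0 z =
      k ^ 2 * ‖γ1 x0‖ ^ 2 + ‖x0 + γ1 x0 - γ2 (x0 + γ1 x0 + z)‖ ^ 2 := by
  unfold advCost
  field_simp

section Adversary

variable {m : ℕ} {k c : ℝ} {γ1 γ2 : EuclideanSpace ℝ (Fin m) → EuclideanSpace ℝ (Fin m)}

theorem exists_lattice_near_of_advCost_le (hm : 0 < m) (hk : k ≠ 0)
    (hcost : ∀ x0 z : EuclideanSpace ℝ (Fin m), (∀ i, |z i| < √3) →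
      advCost m k γ1 γ2 x0 z ≤ c)
    {s : ℝ} (hs : 0 < s) (hs3 : s < 2 * √3) (x0 : EuclideanSpace ℝ (Fin m)) :
    ∃ v : Fin m → ℤ, (∀ i, |v i * s - x0 i| ≤ √(m * c) / |k| + s / 2) ∧
      dist x0 (γ2 (WithLp.toLp 2 fun i => v i * s)) ≤ √((1 + k ^ 2) * (m * c) / k ^ 2) := by
  set u := γ1 x0
  set x1 := x0 + u
  set v : Fin m → ℤ := fun i => round (x1 i / s)
  set q : EuclideanSpace ℝ (Fin m) := WithLp.toLp 2 fun i => v i * s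
  have hz : ∀ i, |(q - x1) i| ≤ s / 2 := fun i => abs_round_div_mul_sub_le hs (x1 i)
  have hbudget : k ^ 2 * ‖u‖ ^ 2 + ‖x1 - γ2 q‖ ^ 2 ≤ m * c := by
    have h := hcost x0 (q - x1) fun i => (hz i).trans_lt (by linarith)
    rw [← mul_le_mul_iff_right₀ (show (0 : ℝ) < m by exact_mod_cast hm), natCast_mul_advCost hm.ne',
      show x0 + γ1 x0 + (q - x1) = q from add_sub_cancel x1 q] at h
    exact h
  have hk2 : 0 < k ^ 2 := by positivity
  have hu : ‖u‖ ≤ √(m * c) / |k| := by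
    rw [le_div_iff₀ (abs_pos.mpr hk), mul_comm]
    refine le_sqrt_of_sq_le ?_
    nlinarith [sq_abs k, sq_nonneg ‖x1 - γ2 q‖]
  refine ⟨v, fun i => ?_, ?_⟩
  · calc |v i * s - x0 i| = |(q - x1) i + u i| := by
          congr 1
          simp [q, x1]
          ring
      _ ≤ s / 2 + ‖u‖ := (abs_add_le _ _).trans (add_le_add (hz i) (PiLp.norm_apply_le u i))
      _ ≤ _ := by linarith
  · have htri : dist x0 (γ2 q) ≤ ‖u‖ + ‖x1 - γ2 q‖ := by
      rw [dist_eq_norm, show x0 - γ2 q = (x1 - γ2 q) - u by simp [x1]; abel]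
      exact (norm_sub_le _ _).trans_eq (add_comm _ _)
    refine htri.trans (le_sqrt_of_sq_le ?_)
    rw [le_div_iff₀ hk2, mul_comm]
    exact (mul_sq_add_le k _ _).trans (mul_le_mul_of_nonneg_left hbudget (by positivity))

theorem six_div_pi_exp_mul_le_of_advCost_le (hm : 0 < m) (hk : k ≠ 0)
    (hcost : ∀ x0 z : EuclideanSpace ℝ (Fin m), (∀ i, |z i| < √3) →
      advCost m k γ1 γ2 x0 z ≤ c) :
    6 / (π * exp 1) * (k ^ 2 / (1 + k ^ 2)) ≤ c := by
  have hc : 0 ≤ c := (advCost_nonneg m k γ1 γ2 0 0).trans (hcost 0 0 fun _ => by simp)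
  set β := √((1 + k ^ 2) * (m * c) / k ^ 2) * √(2 * π * exp 1 / m)
  have hβ : 2 * √3 ≤ β := by
    refine le_of_forall_lt_imp_le_of_dense fun s hs3 => ?_
    rcases le_or_gt s 0 with hs | hs
    · exact hs.trans (by positivity)
    exact le_mul_sqrt_of_lattice_cover hm hs _
      (exists_lattice_near_of_advCost_le hm hk hcost hs hs3)
  have hm' : (0 : ℝ) < m := by exact_mod_cast hm
  have hβ2 : β ^ 2 = 2 * π * exp 1 * (1 + k ^ 2) * c / k ^ 2 := by
    rw [mul_pow, sq_sqrt (by positivity), sq_sqrt (by positivity)]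
    field_simp
  have h12 : 12 ≤ β ^ 2 := by
    nlinarith [sq_sqrt (show (0 : ℝ) ≤ 3 by norm_num), sqrt_nonneg 3]
  rw [hβ2, le_div_iff₀ (by positivity)] at h12
  rw [div_mul_div_comm, div_le_iff₀ (by positivity)]
  nlinarith [pi_pos, exp_pos 1]

end Adversary

theorem iInf_mul_add_sq_max_sub_sqrt_le {a : ℝ} (ha : 0 ≤ a) (k : ℝ) :
    ⨅ P : {p : ℝ // 0 ≤ p}, (k ^ 2 * P.1 + (max (a - √P.1) 0) ^ 2) ≤
      a ^ 2 * (k ^ 2 / (1 + k ^ 2)) := by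
  set t := a / (1 + k ^ 2)
  have hbdd :
      BddBelow (range fun P : {p : ℝ // 0 ≤ p} => k ^ 2 * P.1 + (max (a - √P.1) 0) ^ 2) :=
    ⟨0, by rintro _ ⟨P, rfl⟩; have := P.2; positivity⟩
  refine (ciInf_le hbdd ⟨t ^ 2, sq_nonneg t⟩).trans_eq ?_
  have ht : t ≤ a := div_le_self ha (by nlinarith [sq_nonneg k])
  simp only [sqrt_sq (by positivity : 0 ≤ t), max_eq_left (sub_nonneg.mpr ht), t]
  field_simp
  ring

/-- Lower bound for the adversarial Witsenhausen problem with `|z_i| < √3`: the optimal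
worst-case cost is at least `inf_{P ≥ 0} [k² P + ((√(6/(πe)) - √P)⁺)²]`. -/
theorem adversarial_witsenhausen_lower_bound
    (m : ℕ) (hm : 0 < m) (k : ℝ) (hk : 0 < k) :
    sInf {c : ℝ | ∃ γ1 γ2 : EuclideanSpace ℝ (Fin m) → EuclideanSpace ℝ (Fin m),
        Measurable γ1 ∧ Measurable γ2 ∧
        ∀ x0 z : EuclideanSpace ℝ (Fin m), (∀ i, |z i| < Real.sqrt 3) →
          advCost m k γ1 γ2 x0 z ≤ c} ≥
      ⨅ P : {p : ℝ // 0 ≤ p},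
        (k ^ 2 * P.1 +
          (max (Real.sqrt (6 / (π * Real.exp 1)) - Real.sqrt P.1) 0) ^ 2) := by
  refine le_csInf ⟨3, fun _ => 0, id, measurable_const, measurable_id,
    fun x0 _ hz => advCost_zero_id_le k x0 hz⟩ ?_
  rintro c ⟨γ1, γ2, -, -, hcost⟩
  refine (iInf_mul_add_sq_max_sub_sqrt_le (sqrt_nonneg _) k).trans ?_
  rw [sq_sqrt (by positivity)]
  exact six_div_pi_exp_mul_le_of_advCost_le hm hk.ne' hcost
end

section
/- The upper bound min{3k^2, 3} and lower bound L = inf_{P>=0}[k^2 P + ((√(6/(πe)) - √P)^+)^2] for the adversarial Witsenhausen problem satisfy min{3k^2,3} <= 2πe · L for all k > 0; hence quantization-based strategies are within factor 2πe ≈ 17.08 of optimal. -/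
open Real

/-- The adversarial upper bound `min {3k², 3}` is within a factor `2πe` of the adversarial
lower bound `L = inf_{P ≥ 0} [k² P + ((√(6/(πe)) - √P)⁺)²]`; hence quantization-based
strategies are within factor `2πe ≈ 17.08` of optimal. -/
theorem adversarial_constant_factor (k : ℝ) (hk : 0 < k) :
    min (3 * k ^ 2) 3 ≤
      2 * π * Real.exp 1 *
        ⨅ P : {p : ℝ // 0 ≤ p},
          (k ^ 2 * P.1 +
            (max (Real.sqrt (6 / (π * Real.exp 1)) - Real.sqrt P.1) 0) ^ 2) := by
  have hA : (0:ℝ) < π * Real.exp 1 := mul_pos Real.pi_pos (Real.exp_pos 1)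
  have h2A : (0:ℝ) < 2 * π * Real.exp 1 := by positivity
  set c : ℝ := Real.sqrt (6 / (π * Real.exp 1)) with hc
  have hc0 : 0 ≤ c := Real.sqrt_nonneg _
  have h6 : (π * Real.exp 1) * c ^ 2 = 6 := by
    rw [hc, Real.sq_sqrt (by positivity : (0:ℝ) ≤ 6 / (π * Real.exp 1))]
    field_simp
  have key : min (3 * k ^ 2) 3 / (2 * π * Real.exp 1) ≤
      ⨅ P : {p : ℝ // 0 ≤ p},
        (k ^ 2 * P.1 + (max (c - Real.sqrt P.1) 0) ^ 2) := by
    apply le_ciInf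
    rintro ⟨P, hP⟩
    rw [div_le_iff₀ h2A]
    simp only
    set s : ℝ := Real.sqrt P with hs
    have hs0 : 0 ≤ s := Real.sqrt_nonneg _
    have hs2 : s ^ 2 = P := Real.sq_sqrt hP
    set M : ℝ := max (c - s) 0 with hM
    have hM0 : 0 ≤ M := le_max_right _ _
    rcases le_total s (c / 2) with h | h
    · -- the max term is at least c/2
      have h1 : c / 2 ≤ M := le_max_of_le_left (by linarith)
      have hsq : (c / 2) ^ 2 ≤ M ^ 2 := pow_le_pow_left₀ (by positivity) h1 2
      have hprod := mul_le_mul_of_nonneg_left hsq hA.le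
      have hmin : min (3 * k ^ 2) 3 ≤ 3 := min_le_right _ _
      nlinarith [mul_nonneg (mul_nonneg hA.le (sq_nonneg k)) hP]
    · -- P is at least c²/4
      have hsq : (c / 2) ^ 2 ≤ s ^ 2 := pow_le_pow_left₀ (by positivity) h 2
      have hprod := mul_le_mul_of_nonneg_left hsq
        (mul_nonneg hA.le (sq_nonneg k))
      have hmin : min (3 * k ^ 2) 3 ≤ 3 * k ^ 2 := min_le_left _ _
      have h6k : π * Real.exp 1 * k ^ 2 * (c / 2) ^ 2 = 3 * k ^ 2 / 2 := by
        linear_combination (k ^ 2 / 4) * h6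
      rw [hs2] at hprod
      nlinarith [mul_nonneg hA.le (sq_nonneg M)]
  calc min (3 * k ^ 2) 3
      = min (3 * k ^ 2) 3 / (2 * π * Real.exp 1) * (2 * π * Real.exp 1) := by
        field_simp
    _ ≤ (⨅ P : {p : ℝ // 0 ≤ p},
          (k ^ 2 * P.1 + (max (c - Real.sqrt P.1) 0) ^ 2)) * (2 * π * Real.exp 1) :=
        mul_le_mul_of_nonneg_right key h2A.le
    _ = 2 * π * Real.exp 1 *
          ⨅ P : {p : ℝ // 0 ≤ p},
            (k ^ 2 * P.1 + (max (c - Real.sqrt P.1) 0) ^ 2) := mul_comm _ _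
end
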